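/- arXiv:1305.6376 — 3 statements merged into one kernel-verified Lean document; each statement's English description precedes it below -/
import Mathlib

section
/- For d ≥ 2 and h ≥ 3, and any E ∈ (0, 1/2], there exists a fractional pebbling of the balanced d-ary tree of height h starting from the empty configuration, ending with black weight 2E on the root and zero weight elsewhere, such that the total weight never exceeds (d−1)h/2 + 1 + E. -/
/-- Number of nodes of the complete d-ary tree of height h (levels 0..h-1). -/
def treeSize (d h : ℕ) : ℕ := ∑ k ∈ Finset.range h, d ^ k

/-- A fractional configuration: each node gets (black weight, white weight). -/
abbrev Cfg := ℕ → ℝ × ℝ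

/-- Pebble weight of node i: b(i) + w(i). -/
def pw (c : Cfg) (i : ℕ) : ℝ := (c i).1 + (c i).2

/-- Valid configuration: weights nonnegative, b(i)+w(i) ≤ 1, nothing outside the tree. -/
def Valid (n : ℕ) (c : Cfg) : Prop :=
  (∀ i, 0 ≤ (c i).1 ∧ 0 ≤ (c i).2 ∧ pw c i ≤ 1) ∧ (∀ i, n ≤ i → c i = (0, 0))

/-- Total pebble weight of a configuration. -/
def weight (n : ℕ) (c : Cfg) : ℝ := ∑ i ∈ Finset.range n, pw c i

/-- j is a child of i in heap indexing of the d-ary tree. -/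
def child (d i j : ℕ) : Prop := ∃ k, k < d ∧ j = d * i + 1 + k

def isLeaf (d n i : ℕ) : Prop := i < n ∧ n ≤ d * i + 1

/-- Every child of i has pebble weight 1. -/
def covered (d : ℕ) (c : Cfg) (i : ℕ) : Prop := ∀ j, child d i j → pw c j = 1

/-- Legal fractional pebbling moves: decrease black weight on any node; on a node
whose children all have pebble weight 1, set its white weight to 0 and increase its
black weight arbitrarily, optionally simultaneously decreasing children's black
weights (sliding); increase white weight on any node (subject to validity);
increase black weight on any leaf. -/
def Move (d n : ℕ) (c c' : Cfg) : Prop :=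
  (∃ i, (c' i).1 ≤ (c i).1 ∧ (c' i).2 = (c i).2 ∧ ∀ j, j ≠ i → c' j = c j) ∨
  (∃ i, i < n ∧ covered d c i ∧ (c i).1 ≤ (c' i).1 ∧ (c' i).2 = 0 ∧
    (∀ j, child d i j → (c' j).1 ≤ (c j).1 ∧ (c' j).2 = (c j).2) ∧
    (∀ j, j ≠ i → ¬ child d i j → c' j = c j)) ∨
  (∃ i, (c' i).1 = (c i).1 ∧ (c i).2 ≤ (c' i).2 ∧ ∀ j, j ≠ i → c' j = c j) ∨
  (∃ i, isLeaf d n i ∧ (c' i).2 = (c i).2 ∧ (c i).1 ≤ (c' i).1 ∧ ∀ j, j ≠ i → c' j = c j)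

/-- A fractional pebbling: valid configurations connected by legal moves. -/
def Pebbling (d n T : ℕ) (c : ℕ → Cfg) : Prop :=
  (∀ t, t ≤ T → Valid n (c t)) ∧ (∀ t, t < T → Move d n (c t) (c (t + 1)))

def EmptyCfg (c : Cfg) : Prop := ∀ i, c i = (0, 0)

/-- Root-pebbling: starts and ends empty; at some time the root has pebble weight 1. -/
def RootPebbling (d n T : ℕ) (c : ℕ → Cfg) : Prop :=
  Pebbling d n T c ∧ EmptyCfg (c 0) ∧ EmptyCfg (c T) ∧ ∃ t, t ≤ T ∧ pw (c t) 0 = 1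

/-!
Put `x = 1/2 + E/(d-1)`, so that `(d-1)x = (d-1)/2 + E`. Everything is built from two procedures
on the subtree below a node `u`, run next to an arbitrary configuration `a` that vanishes from the
children of `u` on, with budgets measured above `weight a`:

* *cover* brings every child of `u` to pebble weight 1, the first `d - 1` as `(x, 1 - x)` and the
  last one black (`coverCfg`). It pebbles the first `d - 1` children black `x` one after another
  (cover the child's children, slide, discharge), then covers the last child and slides black 1 onto
  it, and only then adds the white weights: adding them last keeps the peak at
  `(d-1)x + (g-1)(d-1)/2 + d` for a subtree of height `g + 2`.
* *discharge* clears what is left once the black weight of the children has slid onto `u`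
  (`residueCfg`): it discharges below the last child, then removes each white pebble by covering
  the children of its node, sliding black weight 0 onto the node and discharging below it. Its
  peak is the same with `x` replaced by `1 - x`.

Inner nodes always use `x = 1/2`. At the root, covering, sliding black `2E` onto the root and
discharging all stay within `(d-1)h/2 + 1 + E`.
-/

open Function Relation

lemma treeSize_succ (d l : ℕ) : treeSize d (l + 1) = d * treeSize d l + 1 := by
  rw [treeSize, Finset.sum_range_succ', treeSize, Finset.mul_sum]
  simp [pow_succ']

lemma treeSize_mono (d : ℕ) : Monotone (treeSize d) := fun _ _ hlm =>
  Finset.sum_le_sum_of_subset (Finset.range_subset_range.2 hlm)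

lemma mul_add_le_mul_of_lt {d v u : ℕ} (h : v < u) : d * v + d ≤ d * u := by
  simpa [mul_add] using Nat.mul_le_mul_left d h

def OnLevel (d l v : ℕ) : Prop := treeSize d l ≤ v ∧ v < treeSize d (l + 1)

lemma onLevel_zero (d : ℕ) : OnLevel d 0 0 := by simp [OnLevel, treeSize]

namespace OnLevel

variable {d l v : ℕ}

lemma nth_child (hv : OnLevel d l v) {k : ℕ} (hk : k < d) : OnLevel d (l + 1) (d * v + 1 + k) := by
  have h1 := Nat.mul_le_mul_left d hv.1
  have h2 := mul_add_le_mul_of_lt (d := d) hv.2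
  constructor
  · rw [treeSize_succ]; omega
  · rw [treeSize_succ d (l + 1)]; omega

lemma last_child (hv : OnLevel d l v) (hd : 0 < d) : OnLevel d (l + 1) (d * v + d) := by
  simpa [show d * v + 1 + (d - 1) = d * v + d by omega] using hv.nth_child (k := d - 1) (by omega)

lemma lt_treeSize (hv : OnLevel d l v) {h : ℕ} (hl : l < h) : v < treeSize d h :=
  hv.2.trans_le (treeSize_mono d hl)

lemma isLeaf_of_succ_eq (hv : OnLevel d l v) {h : ℕ} (hl : l + 1 = h) :
    isLeaf d (treeSize d h) v := by
  subst hl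
  have := Nat.mul_le_mul_left d hv.1
  exact ⟨hv.2, by rw [treeSize_succ]; omega⟩

end OnLevel

noncomputable def block (s t : ℕ) (p : ℝ × ℝ) : Cfg := fun j => if s ≤ j ∧ j < t then p else 0

section Block

variable {s t m j : ℕ} {p q : ℝ × ℝ}

lemma block_apply_of_mem (hs : s ≤ j) (ht : j < t) : block s t p j = p := if_pos ⟨hs, ht⟩

lemma block_apply_of_lt (hj : j < s) : block s t p j = 0 := if_neg (by omega)

lemma block_apply_of_le (hj : t ≤ j) : block s t p j = 0 := if_neg (by omega)

lemma block_of_le (h : t ≤ s) : block s t p = 0 := funext fun _ => if_neg (by omega)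

lemma block_zero : block s t 0 = 0 := funext fun _ => ite_self 0

lemma block_add : block s t p + block s t q = block s t (p + q) := by
  funext j
  simp only [block, Pi.add_apply]
  split_ifs <;> simp

lemma add_block_succ_eq_update (c : Cfg) (hs : s ≤ m) :
    c + block s (m + 1) q = update (c + block s m q) m ((c + block s m q) m + q) := by
  funext j
  rcases eq_or_ne j m with rfl | hj
  · simp [block_apply_of_mem hs (Nat.lt_succ_self j), block_apply_of_le (le_refl j)]
  · have : (s ≤ j ∧ j < m + 1) ↔ (s ≤ j ∧ j < m) := by omega
    simp only [update_of_ne hj, Pi.add_apply, block, this]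

lemma update_eq_add_block {c : Cfg} (hc : c m = 0) (p : ℝ × ℝ) :
    update c m p = c + block m (m + 1) p := by
  simpa [block_of_le, hc] using (add_block_succ_eq_update c (q := p) (le_refl m)).symm

lemma update_add_of_apply_eq_zero {a : Cfg} (ha : a m = 0) (c : Cfg) (p : ℝ × ℝ) :
    update (a + c) m p = a + update c m p := by
  funext j
  rcases eq_or_ne j m with rfl | hj
  · simp [ha]
  · simp [update_of_ne hj]

lemma update_block_add_block (hs : s ≤ m) (ht : m < t) :
    update (block s m p + block m t q) m p = block s (m + 1) p + block (m + 1) t q := by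
  funext j
  rcases eq_or_ne j m with rfl | hj
  · simp [block_apply_of_mem hs (Nat.lt_succ_self j), block_apply_of_lt (Nat.lt_succ_self j)]
  · have h1 : (s ≤ j ∧ j < m + 1) ↔ (s ≤ j ∧ j < m) := by omega
    have h2 : (m + 1 ≤ j ∧ j < t) ↔ (m ≤ j ∧ j < t) := by omega
    simp only [update_of_ne hj, Pi.add_apply, block, h1, h2]

end Block

section Validity

variable {n : ℕ}

lemma valid_zero : Valid n 0 := ⟨fun _ => by simp [pw], fun _ _ => rfl⟩

lemma Valid.of_forall_eq_or {a b c : Cfg} (ha : Valid n a) (hb : Valid n b)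
    (h : ∀ j, c j = a j ∨ c j = b j) : Valid n c := by
  refine ⟨fun j => ?_, fun j hj => ?_⟩
  · rcases h j with hc | hc
    · simpa [pw, hc] using ha.1 j
    · simpa [pw, hc] using hb.1 j
  · rcases h j with hc | hc
    · rw [hc, ha.2 j hj]
    · rw [hc, hb.2 j hj]

lemma Valid.add {m : ℕ} {a b : Cfg} (ha : Valid n a) (hb : Valid n b)
    (ha' : ∀ j, m ≤ j → a j = 0) (hb' : ∀ j, j < m → b j = 0) : Valid n (a + b) :=
  ha.of_forall_eq_or hb fun j => (le_or_gt m j).symm.imp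
    (fun hj => by simp [hb' j hj]) (fun hj => by simp [ha' j hj])

lemma valid_block {s t : ℕ} {b w : ℝ} (hb : 0 ≤ b) (hw : 0 ≤ w) (hbw : b + w ≤ 1) (ht : t ≤ n) :
    Valid n (block s t (b, w)) := by
  refine ⟨fun j => ?_, fun j hj => block_apply_of_le (ht.trans hj)⟩
  by_cases hj : s ≤ j ∧ j < t
  · simpa [pw, block, hj] using ⟨hb, hw, hbw⟩
  · simp [pw, block, hj]

lemma Valid.update {c : Cfg} (hc : Valid n c) {u : ℕ} (hu : u < n) {b w : ℝ} (hb : 0 ≤ b)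
    (hw : 0 ≤ w) (hbw : b + w ≤ 1) : Valid n (update c u (b, w)) :=
  hc.of_forall_eq_or (valid_block (s := u) hb hw hbw hu) fun j => by
    rcases eq_or_ne j u with rfl | hj
    · simp [block_apply_of_mem le_rfl (Nat.lt_succ_self j)]
    · simp [update_of_ne hj]

end Validity

section Weight

variable {n : ℕ}

lemma pw_add (a b : Cfg) (j : ℕ) : pw (a + b) j = pw a j + pw b j := by
  simp only [pw, Pi.add_apply, Prod.fst_add, Prod.snd_add]; ring

lemma pw_block {s t : ℕ} (p : ℝ × ℝ) (j : ℕ) :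
    pw (block s t p) j = if s ≤ j ∧ j < t then p.1 + p.2 else 0 := by
  by_cases hj : s ≤ j ∧ j < t <;> simp [pw, block, hj]

lemma weight_zero : weight n 0 = 0 := by simp [weight, pw]

lemma weight_add (a b : Cfg) : weight n (a + b) = weight n a + weight n b := by
  simp only [weight, pw_add, Finset.sum_add_distrib]

lemma weight_le_weight {c c' : Cfg} (h : ∀ j, pw c j ≤ pw c' j) : weight n c ≤ weight n c' :=
  Finset.sum_le_sum fun j _ => h j

lemma weight_block_le {s t : ℕ} {b w : ℝ} (hbw : 0 ≤ b + w) :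
    weight n (block s t (b, w)) ≤ (t - s : ℕ) * (b + w) :=
  calc weight n (block s t (b, w))
      = ∑ j ∈ (Finset.range n).filter (fun j => s ≤ j ∧ j < t), (b + w) := by
        rw [Finset.sum_filter]
        exact Finset.sum_congr rfl fun j _ => pw_block (b, w) j
    _ = ((Finset.range n).filter (fun j => s ≤ j ∧ j < t)).card * (b + w) := by
        rw [Finset.sum_const, nsmul_eq_mul]
    _ ≤ (t - s : ℕ) * (b + w) := by
        gcongr
        rw [← Nat.card_Ico]
        refine Finset.card_le_card fun j hj => ?_
        simp only [Finset.mem_filter, Finset.mem_range, Finset.mem_Ico] at hj ⊢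
        exact hj.2

lemma weight_add_block_le (c : Cfg) {s t : ℕ} {b w : ℝ} (hbw : 0 ≤ b + w) :
    weight n (c + block s t (b, w)) ≤ weight n c + (t - s : ℕ) * (b + w) := by
  rw [weight_add]; linarith [weight_block_le (n := n) (s := s) (t := t) hbw]

lemma weight_update_le {c : Cfg} {m : ℕ} (hc : c m = 0) {b w : ℝ} (hbw : 0 ≤ b + w) :
    weight n (update c m (b, w)) ≤ weight n c + (b + w) := by
  simpa [update_eq_add_block hc] using weight_add_block_le (n := n) c (s := m) (t := m + 1) hbw

lemma weight_add_children_le {d : ℕ} (hd : 0 < d) {v : ℕ} (a : Cfg) {b w : ℝ}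
    (hbw : 0 ≤ b + w) :
    weight n (a + block (d * v + 1) (d * v + d) (b, w)) ≤ weight n a + (d - 1) * (b + w) := by
  have hcast : ((d * v + d - (d * v + 1) : ℕ) : ℝ) = d - 1 := by
    rw [Nat.cast_sub (by omega)]; push_cast; ring
  simpa [hcast] using weight_add_block_le (n := n) a (s := d * v + 1) (t := d * v + d) hbw

end Weight

section Moves

variable {d n : ℕ}

lemma move_update_add_white (c : Cfg) (u : ℕ) {w : ℝ} (hw : 0 ≤ w) :
    Move d n c (update c u (c u + (0, w))) :=
  Or.inr <| Or.inr <| Or.inl ⟨u, by simp, by simp [hw], fun _ hj => update_of_ne hj _ _⟩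

lemma move_update_add_leaf (c : Cfg) {u : ℕ} (hu : isLeaf d n u) {b : ℝ} (hb : 0 ≤ b) :
    Move d n c (update c u (c u + (b, 0))) :=
  Or.inr <| Or.inr <| Or.inr ⟨u, hu, by simp, by simp [hb], fun _ hj => update_of_ne hj _ _⟩

end Moves

def Step (d n : ℕ) (B : ℝ) (c c' : Cfg) : Prop :=
  Move d n c c' ∧ Valid n c' ∧ weight n c' ≤ B

abbrev Reach (d n : ℕ) (B : ℝ) : Cfg → Cfg → Prop := ReflTransGen (Step d n B)

lemma reflTransGen_of_forall_lt {α : Type*} {r : α → α → Prop} (f : ℕ → α) {m : ℕ}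
    (h : ∀ i < m, ReflTransGen r (f i) (f (i + 1))) : ReflTransGen r (f 0) (f m) :=
  ReflTransGen.lift' f (fun _ _ => id) _ _ <|
    reflTransGen_of_succ_of_le (fun i j => ReflTransGen r (f i) (f j))
      (fun i hi => by simpa using h i hi.2) (Nat.zero_le m)

namespace Reach

variable {d n : ℕ} {B : ℝ} {a b : Cfg}

lemma valid (hab : Reach d n B a b) (ha : Valid n a) : Valid n b := by
  induction hab with
  | refl => exact ha
  | tail _ hbc _ => exact hbc.2.1

lemma exists_pebbling (hab : Reach d n B a b) (ha : Valid n a) (hwa : weight n a ≤ B) :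
    ∃ T c, Pebbling d n T c ∧ c 0 = a ∧ c T = b ∧ ∀ t ≤ T, weight n (c t) ≤ B := by
  induction hab with
  | refl => exact ⟨0, fun _ => a, ⟨fun _ _ => ha, fun _ h => absurd h (Nat.not_lt_zero _)⟩,
      rfl, rfl, fun _ _ => hwa⟩
  | @tail b b' _ hstep ih =>
    obtain ⟨T, c, ⟨hval, hmove⟩, hc0, hcT, hw⟩ := ih
    obtain ⟨hm, hv, hwb⟩ := hstep
    refine ⟨T + 1, fun t => if t ≤ T then c t else b', ⟨fun t ht => ?_, fun t ht => ?_⟩,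
      by simp [hc0], by simp, fun t ht => ?_⟩
    · by_cases htT : t ≤ T
      · simpa [htT] using hval t htT
      · simpa [htT] using hv
    · rcases Nat.lt_succ_iff_lt_or_eq.1 ht with htT | rfl
      · simpa [htT.le, Nat.succ_le_of_lt htT] using hmove t htT
      · simpa [hcT] using hm
    · by_cases htT : t ≤ T
      · simpa [htT] using hw t htT
      · simpa [htT] using hwb

end Reach

noncomputable def residueCfg (d : ℕ) : ℕ → ℝ → ℕ → Cfg
  | 0, _, _ => 0
  | g + 1, y, v => block (d * v + 1) (d * v + d) (0, 1 - y) + residueCfg d g (1 / 2) (d * v + d)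

noncomputable def coverCfg (d : ℕ) : ℕ → ℝ → ℕ → Cfg
  | 0, _, v => block (d * v + 1) (d * v + d + 1) (1, 0)
  | g + 1, y, v => block (d * v + 1) (d * v + d) (y, 1 - y) +
      block (d * v + d) (d * v + d + 1) (1, 0) + residueCfg d g (1 / 2) (d * v + d)

section Configurations

variable {d : ℕ}

lemma mul_add_le_mul_mul_add (hd : 0 < d) (v : ℕ) : d * v + d ≤ d * (d * v + d) :=
  mul_add_le_mul_of_lt (by nlinarith)

lemma residueCfg_apply_of_le (hd : 0 < d) {g : ℕ} {y : ℝ} {v j : ℕ} (hj : j ≤ d * v) :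
    residueCfg d g y v j = 0 := by
  induction g generalizing y v with
  | zero => rfl
  | succ g ih =>
    have := mul_add_le_mul_mul_add hd v
    rw [residueCfg, Pi.add_apply, block_apply_of_lt (by omega), ih (by omega), add_zero]

lemma coverCfg_apply_of_le (hd : 0 < d) {g : ℕ} {y : ℝ} {v j : ℕ} (hj : j ≤ d * v) :
    coverCfg d g y v j = 0 := by
  have := mul_add_le_mul_mul_add hd v
  cases g with
  | zero => exact block_apply_of_lt (by omega)
  | succ g =>
    rw [coverCfg, Pi.add_apply, Pi.add_apply, block_apply_of_lt (by omega),
      block_apply_of_lt (by omega), residueCfg_apply_of_le hd (by omega), add_zero, add_zero]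

lemma coverCfg_apply_child (hd : 0 < d) {g : ℕ} {y : ℝ} (hy : 0 ≤ y) {v j : ℕ}
    (hj : d * v + 1 ≤ j) (hj' : j < d * v + 1 + d) :
    pw (coverCfg d g y v) j = 1 ∧ (residueCfg d g y v j).1 ≤ (coverCfg d g y v j).1 ∧
      (residueCfg d g y v j).2 = (coverCfg d g y v j).2 := by
  cases g with
  | zero =>
    have hc : coverCfg d 0 y v j = (1, 0) := block_apply_of_mem hj (by omega)
    simp [pw, hc, residueCfg]
  | succ g =>
    have := mul_add_le_mul_mul_add hd v
    have hres := residueCfg_apply_of_le hd (g := g) (y := 1 / 2) (show j ≤ d * (d * v + d) by omega)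
    simp only [pw, coverCfg, residueCfg, Pi.add_apply, hres]
    rcases lt_or_eq_of_le (show j ≤ d * v + d by omega) with hlt | rfl
    · simp [block_apply_of_mem hj hlt, block_apply_of_lt hlt, hy]
    · simp [block_apply_of_le le_rfl, block_apply_of_mem le_rfl (Nat.lt_succ_self _)]

lemma residueCfg_apply_eq_coverCfg (hd : 0 < d) {g : ℕ} {y : ℝ} {v j : ℕ}
    (hj : j < d * v + 1 ∨ d * v + 1 + d ≤ j) : residueCfg d g y v j = coverCfg d g y v j := by
  have hout : ∀ {s t : ℕ} {p : ℝ × ℝ}, d * v + 1 ≤ s → t ≤ d * v + 1 + d → block s t p j = 0 :=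
    fun hs ht => if_neg (by omega)
  cases g with
  | zero => rw [residueCfg, coverCfg, hout le_rfl (by omega)]; rfl
  | succ g =>
    rw [residueCfg, coverCfg, Pi.add_apply, Pi.add_apply, Pi.add_apply, hout le_rfl (by omega),
      hout le_rfl (by omega), hout (by omega) (by omega)]
    simp

lemma valid_residueCfg (hd : 0 < d) {g h l v : ℕ} {y : ℝ} (hv : OnLevel d l v) (hl : l + g < h)
    (hy0 : 0 ≤ y) (hy1 : y ≤ 1) : Valid (treeSize d h) (residueCfg d g y v) := by
  induction g generalizing l v y with
  | zero => exact valid_zero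
  | succ g ih =>
    have hlast := hv.last_child hd
    have := mul_add_le_mul_mul_add hd v
    rw [residueCfg]
    exact (valid_block (s := d * v + 1) le_rfl (by linarith) (by linarith)
      (hlast.lt_treeSize (by omega)).le).add (m := d * v + d)
      (ih (y := 1 / 2) hlast (by omega) (by norm_num) (by norm_num))
      (fun j hj => block_apply_of_le hj) (fun j hj => residueCfg_apply_of_le hd (by omega))

lemma valid_coverCfg (hd : 0 < d) {g h l v : ℕ} {y : ℝ} (hv : OnLevel d l v) (hl : l + g + 1 < h)
    (hy0 : 0 ≤ y) (hy1 : y ≤ 1) : Valid (treeSize d h) (coverCfg d g y v) := by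
  have hlast := hv.last_child hd
  have hlt := hlast.lt_treeSize (h := h) (by omega)
  have := mul_add_le_mul_mul_add hd v
  cases g with
  | zero => exact valid_block zero_le_one le_rfl (by norm_num) hlt
  | succ g =>
    have hchildren : Valid (treeSize d h)
        (block (d * v + 1) (d * v + d) (y, 1 - y) + block (d * v + d) (d * v + d + 1) (1, 0)) :=
      (valid_block hy0 (by linarith) (by linarith) hlt.le).add
        (valid_block zero_le_one le_rfl (by norm_num) hlt) (fun j hj => block_apply_of_le hj)
        (fun j hj => block_apply_of_lt hj)
    refine hchildren.add (m := d * v + d + 1)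
      (valid_residueCfg hd hlast (by omega) (by norm_num) (by norm_num)) (fun j hj => ?_)
      (fun j hj => residueCfg_apply_of_le hd (by omega))
    simp [block_apply_of_le (show d * v + d ≤ j by omega), block_apply_of_le hj]

lemma weight_residueCfg_le (hd : 0 < d) {n g : ℕ} {y : ℝ} (hy : y ≤ 1) (v : ℕ) :
    weight n (residueCfg d g y v) ≤ (d - 1) * (1 - y) + g * (d - 1) / 2 := by
  have hd1 : (1 : ℝ) ≤ d := by exact_mod_cast hd
  induction g generalizing y v with
  | zero => simpa [residueCfg, weight_zero] using mul_nonneg (sub_nonneg.2 hd1) (sub_nonneg.2 hy)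
  | succ g ih =>
    have hblock := weight_block_le (n := n) (s := d * v + 1) (t := d * v + d) (b := 0) (w := 1 - y)
      (by linarith)
    have hcast : ((d * v + d - (d * v + 1) : ℕ) : ℝ) = d - 1 := by
      rw [Nat.cast_sub (by omega)]; push_cast; ring
    rw [residueCfg, weight_add]
    rw [hcast] at hblock
    have := ih (y := 1 / 2) (by norm_num) (d * v + d)
    push_cast
    linarith

lemma weight_coverCfg_le (hd : 0 < d) {n g : ℕ} (y : ℝ) (v : ℕ) :
    weight n (coverCfg d g y v) ≤ d + g * (d - 1) / 2 := by
  cases g with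
  | zero =>
    rw [coverCfg]
    simpa [show d * v + d + 1 - (d * v + 1) = d by omega] using
      weight_block_le (n := n) (s := d * v + 1) (t := d * v + d + 1) (b := 1) (w := 0) (by norm_num)
  | succ g =>
    have hfirst := weight_block_le (n := n) (s := d * v + 1) (t := d * v + d) (b := y) (w := 1 - y)
      (by norm_num)
    have hlast := weight_block_le (n := n) (s := d * v + d) (t := d * v + d + 1) (b := 1) (w := 0)
      (by norm_num)
    have hres := weight_residueCfg_le hd (n := n) (g := g) (y := 1 / 2) (by norm_num) (d * v + d)
    rw [show d * v + d - (d * v + 1) = d - 1 by omega, Nat.cast_sub hd] at hfirst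
    rw [coverCfg, weight_add, weight_add]
    simp only [Nat.add_sub_cancel_left] at hlast
    push_cast at hfirst hlast ⊢
    linarith

end Configurations

lemma child_iff {d i j : ℕ} : child d i j ↔ d * i + 1 ≤ j ∧ j < d * i + 1 + d :=
  ⟨fun ⟨k, hk, hj⟩ => by omega, fun hj => ⟨j - (d * i + 1), by omega, by omega⟩⟩

lemma move_slide {d n g u : ℕ} (hd : 0 < d) {y b : ℝ} {a : Cfg} (hy : 0 ≤ y) (hu : u < n)
    (hau : ∀ j, d * u + 1 ≤ j → a j = 0) (hab : (a u).1 ≤ b) :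
    Move d n (a + coverCfg d g y u) (update a u (b, 0) + residueCfg d g y u) := by
  have hu' : u ≤ d * u := Nat.le_mul_of_pos_left u hd
  refine Or.inr <| Or.inl ⟨u, hu, fun j hj => ?_, ?_, ?_, fun j hj => ?_, fun j hj hnot => ?_⟩
  · obtain ⟨h1, h2⟩ := child_iff.1 hj
    simpa [pw, hau j h1] using (coverCfg_apply_child hd hy h1 h2).1
  · simpa [coverCfg_apply_of_le hd hu', residueCfg_apply_of_le hd hu'] using hab
  · simp [residueCfg_apply_of_le hd hu']
  · obtain ⟨h1, h2⟩ := child_iff.1 hj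
    obtain ⟨-, hb, hw⟩ := coverCfg_apply_child hd (g := g) hy h1 h2
    simp [update_of_ne (show j ≠ u by omega), hau j h1, hb, hw]
  · rw [child_iff] at hnot
    simp [update_of_ne hj,
      residueCfg_apply_eq_coverCfg hd (show j < d * u + 1 ∨ d * u + 1 + d ≤ j by omega)]

lemma reach_add_block {d n s t : ℕ} {B : ℝ} {c : Cfg} {q : ℝ × ℝ}
    (hmove : ∀ m, s ≤ m → m < t → ∀ c' : Cfg, Move d n c' (update c' m (c' m + q)))
    (hc : Valid n c) (hct : Valid n (c + block s t q)) (hq : 0 ≤ q.1 + q.2)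
    (hB : weight n (c + block s t q) ≤ B) : Reach d n B c (c + block s t q) := by
  rcases lt_or_ge t s with hts | hst
  · rw [block_of_le hts.le, add_zero]
  obtain ⟨k, rfl⟩ := Nat.exists_eq_add_of_le hst
  suffices Reach d n B (c + block s (s + 0) q) (c + block s (s + k) q) by
    simpa [block_of_le] using this
  refine reflTransGen_of_forall_lt (fun i => c + block s (s + i) q) fun i hi => ?_
  have hvalid : Valid n (c + block s (s + (i + 1)) q) := hc.of_forall_eq_or hct fun j => by
    by_cases hj : s ≤ j ∧ j < s + (i + 1)
    · right; simp [block_apply_of_mem hj.1 hj.2, block_apply_of_mem hj.1 (show j < s + k by omega)]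
    · left; simp [block, hj]
  have hweight : weight n (c + block s (s + (i + 1)) q) ≤ B := by
    refine le_trans (weight_le_weight fun j => ?_) hB
    simp only [pw_add, pw_block]
    split_ifs <;> first | omega | linarith
  refine .single ⟨?_, hvalid, hweight⟩
  rw [show s + (i + 1) = s + i + 1 from rfl, add_block_succ_eq_update c (Nat.le_add_right s i)]
  exact hmove _ (by omega) (by omega) _

noncomputable def peakCost (d g : ℕ) (y : ℝ) : ℝ := (d - 1) * y + (g - 1) * (d - 1) / 2 + d

def CanCover (d h g : ℕ) : Prop :=
  ∀ ⦃l u : ℕ⦄ ⦃y B : ℝ⦄ ⦃a : Cfg⦄, OnLevel d l u → l + g + 2 = h → 1 / 2 ≤ y → y ≤ 1 →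
    Valid (treeSize d h) a → (∀ j, d * u + 1 ≤ j → a j = 0) →
    weight (treeSize d h) a + peakCost d g y ≤ B →
    Reach d (treeSize d h) B a (a + coverCfg d g y u)

def CanDischarge (d h g : ℕ) : Prop :=
  ∀ ⦃l u : ℕ⦄ ⦃y B : ℝ⦄ ⦃a : Cfg⦄, OnLevel d l u → l + g + 2 = h → 0 ≤ y → y ≤ 1 →
    Valid (treeSize d h) a → (∀ j, d * u + 1 ≤ j → a j = 0) →
    weight (treeSize d h) a + peakCost d g (1 - y) ≤ B →
    Reach d (treeSize d h) B (a + residueCfg d g y u) a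

section Procedures

variable {d h g : ℕ}

lemma reach_cover_slide (hd : 0 < d) (hC : CanCover d h g) {l u : ℕ} {y b B : ℝ} {a : Cfg}
    (hu : OnLevel d l u) (hlg : l + g + 2 = h) (hy : 1 / 2 ≤ y) (hy1 : y ≤ 1)
    (ha : Valid (treeSize d h) a) (hau : ∀ j, d * u + 1 ≤ j → a j = 0)
    (hb0 : 0 ≤ b) (hb1 : b ≤ 1) (hab : (a u).1 ≤ b)
    (hB1 : weight (treeSize d h) a + peakCost d g y ≤ B)
    (hB2 : weight (treeSize d h) (update a u (b, 0)) + (d - 1) * (1 - y) + g * (d - 1) / 2 ≤ B) :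
    Reach d (treeSize d h) B a (update a u (b, 0) + residueCfg d g y u) := by
  have hun : u < treeSize d h := hu.lt_treeSize (by omega)
  have hu' : u < d * u + 1 := by nlinarith
  refine (hC hu hlg hy hy1 ha hau hB1).tail ⟨move_slide hd (by linarith) hun hau hab, ?_, ?_⟩
  · exact (ha.update hun hb0 le_rfl (by linarith)).add (m := d * u + 1)
      (valid_residueCfg hd hu (by omega) (by linarith) hy1)
      (fun j hj => by simp [update_of_ne (show j ≠ u by omega), hau j hj])
      (fun j hj => residueCfg_apply_of_le hd (by omega))
  · rw [weight_add]
    linarith [weight_residueCfg_le hd (n := treeSize d h) (g := g) hy1 u]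

lemma reach_pebble (hd : 0 < d) (hC : CanCover d h g) (hD : CanDischarge d h g) {l u : ℕ}
    {y b B : ℝ} {a : Cfg} (hu : OnLevel d l u) (hlg : l + g + 2 = h) (hy : 1 / 2 ≤ y) (hy1 : y ≤ 1)
    (ha : Valid (treeSize d h) a) (hau : ∀ j, d * u + 1 ≤ j → a j = 0)
    (hb0 : 0 ≤ b) (hb1 : b ≤ 1) (hab : (a u).1 ≤ b)
    (hB1 : weight (treeSize d h) a + peakCost d g y ≤ B)
    (hB2 : weight (treeSize d h) (update a u (b, 0)) + peakCost d g (1 - y) ≤ B) :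
    Reach d (treeSize d h) B a (update a u (b, 0)) := by
  have hun : u < treeSize d h := hu.lt_treeSize (by omega)
  have hu' : u < d * u + 1 := by nlinarith
  refine (reach_cover_slide hd hC hu hlg hy hy1 ha hau hb0 hb1 hab hB1 ?_).trans
    (hD hu hlg (by linarith) hy1 (ha.update hun hb0 le_rfl (by linarith))
      (fun j hj => by simp [update_of_ne (show j ≠ u by omega), hau j hj]) hB2)
  unfold peakCost at hB2
  linarith

lemma reach_replace_child (hd : 0 < d) (hC : CanCover d h g) (hD : CanDischarge d h g)
    {l v k : ℕ} {b w r B : ℝ} {a : Cfg} (hv : OnLevel d l v) (hlg : l + g + 3 = h)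
    (ha : Valid (treeSize d h) a) (hav : ∀ j, d * v + 1 ≤ j → a j = 0) (hk : k < d - 1)
    (hb : 0 ≤ b) (hw : 0 ≤ w) (hbr : b ≤ r) (hwr : w ≤ r) (hr : r ≤ 1)
    (hB : weight (treeSize d h) a + (d - 1) * r + peakCost d g (1 / 2) ≤ B) :
    Reach d (treeSize d h) B
      (a + (block (d * v + 1) (d * v + 1 + k) (b, 0) + block (d * v + 1 + k) (d * v + d) (0, w)))
      (a + (block (d * v + 1) (d * v + 1 + k + 1) (b, 0) +
        block (d * v + 1 + k + 1) (d * v + d) (0, w))) := by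
  obtain ⟨s, t, hs, ht⟩ : ∃ s t, s = d * v + 1 ∧ t = d * v + d := ⟨_, _, rfl, rfl⟩
  rw [← hs, ← ht]
  let f : ℕ → Cfg := fun k => a + (block s (s + k) (b, 0) + block (s + k) t (0, w))
  have htn : t < treeSize d h := ht ▸ (hv.last_child hd).lt_treeSize (by omega)
  have hweight : ∀ k ≤ d - 1,
      weight (treeSize d h) (f k) ≤ weight (treeSize d h) a + (d - 1) * r := fun k hk => by
    refine le_trans (weight_le_weight fun j => ?_) (by
      simpa [← hs, ← ht] using weight_add_children_le hd (n := treeSize d h) (v := v) a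
        (b := r) (w := 0) (by linarith))
    simp only [f, pw_add, pw_block]
    split_ifs <;> first | omega | linarith
  have hupdate : update (f k) (s + k) (b, 0) = f (k + 1) := by
    rw [update_add_of_apply_eq_zero (hav _ (by omega)),
      update_block_add_block (Nat.le_add_right s k) (by omega)]
    rfl
  have hfk : (f k (s + k)).1 = 0 := by
    simp [f, hav (s + k) (by omega), block_apply_of_le (le_refl (s + k)),
      block_apply_of_mem (le_refl (s + k)) (show s + k < t by omega)]
  have hvalid : Valid (treeSize d h) (f k) :=
    ha.add (m := s) ((valid_block hb le_rfl (by linarith) (by omega)).add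
      (valid_block le_rfl hw (by linarith) htn.le) (fun j hj => block_apply_of_le hj)
      (fun j hj => block_apply_of_lt hj)) (fun j hj => hav j (by omega))
      (fun j hj => by simp [block_apply_of_lt hj, block_apply_of_lt (show j < s + k by omega)])
  have hvanish : ∀ j, d * (s + k) + 1 ≤ j → f k j = 0 := fun j hj => by
    have : t ≤ d * (s + k) := ht ▸ mul_add_le_mul_of_lt (by nlinarith)
    have : s + k ≤ d * (s + k) := Nat.le_mul_of_pos_left _ hd
    simp [f, hav j (by omega), block_apply_of_le (show t ≤ j by omega),
      block_apply_of_le (show s + k ≤ j by omega)]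
  show Reach _ _ B (f k) (f (k + 1))
  rw [← hupdate]
  refine reach_pebble hd hC hD (hs ▸ hv.nth_child (k := k) (by omega)) (by omega) le_rfl
    (by norm_num) hvalid hvanish hb (by linarith) (hfk ▸ hb) ?_ ?_
  · linarith [hweight k hk.le]
  · rw [hupdate, show (1 : ℝ) - 1 / 2 = 1 / 2 by norm_num]
    linarith [hweight (k + 1) hk]

lemma reach_replace_children (hd : 0 < d) (hC : CanCover d h g) (hD : CanDischarge d h g)
    {l v : ℕ} {b w r B : ℝ} {a : Cfg} (hv : OnLevel d l v) (hlg : l + g + 3 = h)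
    (ha : Valid (treeSize d h) a) (hav : ∀ j, d * v + 1 ≤ j → a j = 0)
    (hb : 0 ≤ b) (hw : 0 ≤ w) (hbr : b ≤ r) (hwr : w ≤ r) (hr : r ≤ 1)
    (hB : weight (treeSize d h) a + (d - 1) * r + peakCost d g (1 / 2) ≤ B) :
    Reach d (treeSize d h) B (a + block (d * v + 1) (d * v + d) (0, w))
      (a + block (d * v + 1) (d * v + d) (b, 0)) := by
  have hchain := reflTransGen_of_forall_lt (r := Step d (treeSize d h) B)
    (fun k => a + (block (d * v + 1) (d * v + 1 + k) (b, 0) +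
      block (d * v + 1 + k) (d * v + d) (0, w))) (m := d - 1)
    fun k hk => reach_replace_child hd hC hD hv hlg ha hav hk hb hw hbr hwr hr hB
  simpa [block_of_le, show d * v + 1 + (d - 1) = d * v + d by omega] using hchain

lemma canCover_zero (hd : 0 < d) : CanCover d h 0 := by
  intro l v y B a hv hlg hy hy1 ha hav hB
  have hd1 : (1 : ℝ) ≤ d := by exact_mod_cast hd
  have hlt := (hv.last_child hd).lt_treeSize (h := h) (by omega)
  have hw : weight (treeSize d h) (block (d * v + 1) (d * v + d + 1) (1, 0)) ≤
      d + (0 : ℕ) * (d - 1) / 2 := weight_coverCfg_le hd (g := 0) y v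
  show Reach d _ B a (a + block (d * v + 1) (d * v + d + 1) (1, 0))
  refine reach_add_block (fun m hm hm' c => move_update_add_leaf c ?_ zero_le_one) ha
    (ha.add (m := d * v + 1) (valid_block zero_le_one le_rfl (by norm_num) hlt) hav
      (fun j hj => block_apply_of_lt hj)) (by norm_num) ?_
  · simpa [show d * v + 1 + (m - (d * v + 1)) = m by omega] using
      (hv.nth_child (k := m - (d * v + 1)) (by omega)).isLeaf_of_succ_eq (h := h) (by omega)
  · unfold peakCost at hB
    rw [weight_add]
    push_cast at hB hw
    nlinarith

lemma canCover_succ (hd : 0 < d) (hC : CanCover d h g) (hD : CanDischarge d h g) :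
    CanCover d h (g + 1) := by
  intro l v x B a hv hlg hx hx1 ha hav hB
  have hd1 : (1 : ℝ) ≤ d := by exact_mod_cast hd
  have hlast := hv.last_child hd
  have hlt := hlast.lt_treeSize (h := h) (by omega)
  have hmul := mul_add_le_mul_mul_add hd v
  unfold peakCost at hB
  push_cast at hB
  obtain ⟨a₁, ha₁⟩ : ∃ a₁, a₁ = a + block (d * v + 1) (d * v + d) (x, 0) := ⟨_, rfl⟩
  have hval₁ : Valid (treeSize d h) a₁ := ha₁ ▸ ha.add (m := d * v + 1)
    (valid_block (by linarith) le_rfl (by linarith) hlt.le) hav (fun j hj => block_apply_of_lt hj)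
  have hlast₁ : a₁ (d * v + d) = 0 := by
    simp [ha₁, hav (d * v + d) (by omega), block_apply_of_le le_rfl]
  have hw₁ : weight (treeSize d h) a₁ ≤ weight (treeSize d h) a + (d - 1) * x := by
    simpa [ha₁] using weight_add_children_le hd (n := treeSize d h) (v := v) a (b := x) (w := 0)
      (by linarith)
  have hw₂ := weight_update_le (n := treeSize d h) hlast₁ (b := 1) (w := 0) (by norm_num)
  have hwC := weight_coverCfg_le hd (n := treeSize d h) (g := g + 1) x v
  have h1 := reach_replace_children hd hC hD hv (by omega) ha hav (b := x) (w := 0) (r := x)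
    (B := B) (by linarith) le_rfl le_rfl (by linarith) hx1 (by unfold peakCost; linarith)
  rw [Prod.mk_zero_zero, block_zero, add_zero, ← ha₁] at h1
  have h2 := reach_cover_slide hd hC hlast (by omega) le_rfl (by norm_num) hval₁
    (fun j hj => by simp [ha₁, hav j (by omega), block_apply_of_le (show d * v + d ≤ j by omega)])
    zero_le_one le_rfl (by simp [hlast₁]) (B := B) (by unfold peakCost; linarith)
    (by linarith)
  have hfinal : update a₁ (d * v + d) (1, 0) + residueCfg d g (1 / 2) (d * v + d) +
      block (d * v + 1) (d * v + d) (0, 1 - x) = a + coverCfg d (g + 1) x v := by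
    rw [update_eq_add_block hlast₁, ha₁, coverCfg,
      show ((x, 1 - x) : ℝ × ℝ) = (x, 0) + (0, 1 - x) by simp, ← block_add]
    abel
  have h3 := reach_add_block (d := d) (B := B)
    (fun m _ _ c => move_update_add_white c m (sub_nonneg.2 hx1)) (h2.valid hval₁)
    (hfinal ▸ ha.add (m := d * v + 1) (valid_coverCfg hd hv (by omega) (by linarith) hx1) hav
      (fun j hj => coverCfg_apply_of_le hd (by omega))) (by simp [hx1])
    (hfinal ▸ by rw [weight_add]; push_cast at hwC; nlinarith)
  exact h1.trans (h2.trans (hfinal ▸ h3))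

lemma canDischarge_succ (hd : 0 < d) (hC : CanCover d h g) (hD : CanDischarge d h g) :
    CanDischarge d h (g + 1) := by
  intro l v y B a hv hlg hy0 hy1 ha hav hB
  have hlast := hv.last_child hd
  have hlt := hlast.lt_treeSize (h := h) (by omega)
  have hmul := mul_add_le_mul_mul_add hd v
  have hcost : peakCost d (g + 1) (1 - y) = (d - 1) * (1 - y) + peakCost d g (1 / 2) := by
    unfold peakCost; push_cast; ring
  have hw₁ := weight_add_children_le hd (n := treeSize d h) (v := v) a (b := 0) (w := 1 - y)
    (by linarith)
  have h1 : Reach d (treeSize d h) B (a + residueCfg d (g + 1) y v)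
      (a + block (d * v + 1) (d * v + d) (0, 1 - y)) := by
    rw [residueCfg, ← add_assoc]
    refine hD hlast (by omega) (by norm_num) (by norm_num)
      (ha.add (m := d * v + 1) (valid_block le_rfl (by linarith) (by linarith) hlt.le) hav
        (fun j hj => block_apply_of_lt hj))
      (fun j hj => by simp [hav j (by omega), block_apply_of_le (show d * v + d ≤ j by omega)]) ?_
    rw [show (1 : ℝ) - 1 / 2 = 1 / 2 by norm_num]
    simp only [zero_add] at hw₁
    linarith
  have h2 := reach_replace_children hd hC hD hv (by omega) ha hav (b := 0) (w := 1 - y) (r := 1 - y)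
    le_rfl (by linarith) (by linarith) le_rfl (by linarith) (B := B) (by linarith)
  simp only [Prod.mk_zero_zero, block_zero, add_zero] at h2
  exact h1.trans h2

lemma canCover_and_canDischarge (hd : 0 < d) : ∀ g, CanCover d h g ∧ CanDischarge d h g
  | 0 => ⟨canCover_zero hd, fun _ _ _ _ _ _ _ _ _ _ _ _ => by
      rw [residueCfg, add_zero]⟩
  | g + 1 =>
    have ⟨hC, hD⟩ := canCover_and_canDischarge hd g
    ⟨canCover_succ hd hC hD, canDischarge_succ hd hC hD⟩

end Procedures

/-- a fractional pebbling of the d-ary tree of height h ≥ 3 that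
starts empty, ends with black weight 2E on the root and nothing elsewhere, and
never exceeds weight (d-1)h/2 + 1 + E. -/
theorem frac_leave_black_on_root (d h : ℕ) (hd : 2 ≤ d) (hh : 3 ≤ h)
    (E : ℝ) (hE0 : 0 < E) (hE : E ≤ 1 / 2) :
    ∃ T c, Pebbling d (treeSize d h) T c ∧ EmptyCfg (c 0) ∧
      (c T) 0 = (2 * E, 0) ∧ (∀ i, i ≠ 0 → (c T) i = (0, 0)) ∧
      ∀ t, t ≤ T → weight (treeSize d h) (c t) ≤ ((d : ℝ) - 1) * h / 2 + 1 + E := by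
  obtain ⟨x, hdx, hx0, hx1⟩ : ∃ x : ℝ, (d - 1) * x = (d - 1) / 2 + E ∧ 1 / 2 ≤ x ∧ x ≤ 1 := by
    have hd1 : (1 : ℝ) ≤ d - 1 := by
      have : (2 : ℝ) ≤ d := by exact_mod_cast hd
      linarith
    have hEd := div_nonneg hE0.le (zero_le_one.trans hd1)
    refine ⟨1 / 2 + E / (d - 1), by field_simp, by linarith, ?_⟩
    linarith [div_le_self hE0.le hd1]
  have hh2 : ((h - 2 : ℕ) : ℝ) = h - 2 := by rw [Nat.cast_sub (by omega)]; norm_num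
  have hroot := weight_update_le (n := treeSize d h) (c := 0) (m := 0) rfl (b := 2 * E) (w := 0)
    (by linarith)
  rw [weight_zero] at hroot
  obtain ⟨hC, hD⟩ := canCover_and_canDischarge (d := d) (h := h) (by omega) (h - 2)
  have hreach := reach_pebble (by omega) hC hD (onLevel_zero d) (by omega) hx0 hx1 valid_zero
    (fun _ _ => rfl) (b := 2 * E) (by linarith) (by linarith) (show (0 : ℝ) ≤ 2 * E by linarith)
    (B := ((d : ℝ) - 1) * h / 2 + 1 + E) (by unfold peakCost; rw [weight_zero, hh2]; nlinarith)
    (by unfold peakCost; rw [hh2]; nlinarith)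
  obtain ⟨T, c, hc, hc0, hcT, hw⟩ := hreach.exists_pebbling valid_zero (by
    rw [weight_zero]; nlinarith)
  refine ⟨T, c, hc, fun i => by rw [hc0]; rfl, by simp [hcT], fun i hi => ?_, hw⟩
  rw [hcT, update_of_ne hi]
  rfl
end

section
/- In the fractional pebbling game on the balanced d-ary tree of height 3 (d ≥ 2), suppose a pebbling never increases the black pebble weight of any child of the root before a time t* at which all d children of the root have pebble weight 1, and the initial black weight in the subtrees is at most 1−ε for ε ∈ (−1/2,1/2]. Then the white weight on the children of the root at time t* is at least d−1+ε, and at the first time after t* at which any of this white weight is removed, the total subtree weight is at least 2d−1+ε. -/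
/-!
At time `t*` the `d` children of the root are full, and since their black weight has only
decreased from the initial configuration, at most `1 - ε` of it is black; the rest is white.
White weight can only be removed from a node by the move that pebbles it, which requires its
`d` children (at depth two) to be full. These are disjoint from depth one, where no white
weight has been removed since `t*`, so the subtree then carries `(d - 1 + ε) + d`.
-/

theorem monotoneOn_nat_Icc_of_le_succ {α : Type*} [Preorder α] {f : ℕ → α} {a b : ℕ}
    (hf : ∀ n, a ≤ n → n < b → f n ≤ f (n + 1)) : MonotoneOn f (Set.Icc a b) := by
  rintro m ⟨ham, -⟩ n ⟨-, hnb⟩ hmn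
  induction n, hmn using Nat.le_induction with
  | base => exact le_rfl
  | succ n hmn ih => exact (ih (by omega)).trans (hf n (ham.trans hmn) (by omega))

theorem antitoneOn_nat_Icc_of_succ_le {α : Type*} [Preorder α] {f : ℕ → α} {a b : ℕ}
    (hf : ∀ n, a ≤ n → n < b → f (n + 1) ≤ f n) : AntitoneOn f (Set.Icc a b) :=
  monotoneOn_nat_Icc_of_le_succ (α := αᵒᵈ) hf

theorem treeSize_three (d : ℕ) : treeSize d 3 = d * d + d + 1 := by
  simp only [treeSize, Finset.sum_range_succ, Finset.sum_range_zero]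
  ring

def children (d i : ℕ) : Finset ℕ := Finset.Icc (d * i + 1) (d * i + d)

theorem child_iff_mem_children {d i j : ℕ} : child d i j ↔ j ∈ children d i := by
  simp only [child, children, Finset.mem_Icc]
  constructor
  · rintro ⟨k, hk, rfl⟩
    omega
  · intro hj
    exact ⟨j - (d * i + 1), by omega, by omega⟩

theorem children_zero (d : ℕ) : children d 0 = Finset.Icc 1 d := by
  simp [children]

theorem Icc_one_subset_Ico_treeSize_three (d : ℕ) :
    Finset.Icc 1 d ⊆ Finset.Ico 1 (treeSize d 3) := by
  intro x hx
  simp only [treeSize_three, Finset.mem_Icc, Finset.mem_Ico] at hx ⊢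
  omega

namespace Valid

variable {n : ℕ} {c : Cfg}

theorem black_nonneg (hc : Valid n c) (i : ℕ) : 0 ≤ (c i).1 := (hc.1 i).1

theorem white_le_pw (hc : Valid n c) (i : ℕ) : (c i).2 ≤ pw c i := by
  simpa [pw] using hc.black_nonneg i

theorem pw_nonneg (hc : Valid n c) (i : ℕ) : 0 ≤ pw c i :=
  (hc.1 i).2.1.trans (hc.white_le_pw i)

end Valid

theorem Move.covered_of_white_lt {d n : ℕ} {c c' : Cfg} {j : ℕ} (h : Move d n c c')
    (hj : (c' j).2 < (c j).2) : covered d c j := by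
  have hne : (c' j).2 ≠ (c j).2 := hj.ne
  rcases h with ⟨i, -, hw, hrest⟩ | ⟨i, -, hcov, -, -, hch, hrest⟩ | ⟨i, -, hw, hrest⟩ |
      ⟨i, -, hw, -, hrest⟩
  · obtain rfl | hji := eq_or_ne j i
    · exact absurd hw hne
    · exact absurd (by rw [hrest j hji]) hne
  · obtain rfl | hji := eq_or_ne j i
    · exact hcov
    · by_cases hchj : child d i j
      · exact absurd (hch j hchj).2 hne
      · exact absurd (by rw [hrest j hji hchj]) hne
  · obtain rfl | hji := eq_or_ne j i
    · exact absurd hw hj.not_ge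
    · exact absurd (by rw [hrest j hji]) hne
  · obtain rfl | hji := eq_or_ne j i
    · exact absurd hw hne
    · exact absurd (by rw [hrest j hji]) hne

theorem sum_pw_children_of_covered {d i : ℕ} {c : Cfg} (h : covered d c i) :
    ∑ j ∈ children d i, pw c j = d := by
  rw [Finset.sum_congr rfl fun j hj => h j (child_iff_mem_children.2 hj)]
  simp [children]

theorem sum_white_children_of_covered {d i : ℕ} {c : Cfg} (h : covered d c i) :
    ∑ j ∈ children d i, (c j).2 = d - ∑ j ∈ children d i, (c j).1 := by
  rw [← sum_pw_children_of_covered h, eq_sub_iff_add_eq, ← Finset.sum_add_distrib]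
  exact Finset.sum_congr rfl fun j _ => add_comm _ _

theorem sum_white_children_zero_add_le_of_covered {d n j₀ : ℕ} {c : Cfg} (hc : Valid n c)
    (hj₀ : j₀ ∈ Finset.Icc 1 d) (h : covered d c j₀) :
    ∑ j ∈ Finset.Icc 1 d, (c j).2 + d ≤ ∑ i ∈ Finset.Ico 1 (treeSize d 3), pw c i := by
  rw [Finset.mem_Icc] at hj₀
  have hdj₀ : d ≤ d * j₀ := Nat.le_mul_of_pos_right d hj₀.1
  have hdj₀' : d * j₀ ≤ d * d := Nat.mul_le_mul_left d hj₀.2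
  have hdisj : Disjoint (Finset.Icc 1 d) (children d j₀) := by
    rw [children, Finset.disjoint_left]
    intro x hx hx'
    simp only [Finset.mem_Icc] at hx hx'
    omega
  have hsub : Finset.Icc 1 d ∪ children d j₀ ⊆ Finset.Ico 1 (treeSize d 3) := by
    intro x hx
    simp only [children, treeSize_three, Finset.mem_union, Finset.mem_Icc,
      Finset.mem_Ico] at hx ⊢
    omega
  calc ∑ j ∈ Finset.Icc 1 d, (c j).2 + d
      ≤ ∑ j ∈ Finset.Icc 1 d, pw c j + ∑ j ∈ children d j₀, pw c j := by
        rw [sum_pw_children_of_covered h]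
        gcongr with j
        exact hc.white_le_pw j
    _ = ∑ i ∈ Finset.Icc 1 d ∪ children d j₀, pw c i := (Finset.sum_union hdisj).symm
    _ ≤ ∑ i ∈ Finset.Ico 1 (treeSize d 3), pw c i :=
        Finset.sum_le_sum_of_subset_of_nonneg hsub fun i _ _ => hc.pw_nonneg i

theorem frac_base_no_black_increase_general (d : ℕ) (ε : ℝ)
    (T : ℕ) (c : ℕ → Cfg) (tstar : ℕ)
    (hp : Pebbling d (treeSize d 3) T c)
    (hcov : ∀ j, child d 0 j → pw (c tstar) j = 1)
    (hinit : (∑ i ∈ Finset.Ico 1 (treeSize d 3), ((c 0) i).1) ≤ 1 - ε)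
    (hnoinc : ∀ t, t < tstar → ∀ j, child d 0 j → ((c (t + 1)) j).1 ≤ ((c t) j).1) :
    ((d : ℝ) - 1 + ε ≤ ∑ j ∈ Finset.Icc 1 d, ((c tstar) j).2) ∧
    ∀ s, tstar ≤ s → s < T →
      (∃ j ∈ Finset.Icc 1 d, ((c (s + 1)) j).2 < ((c s) j).2) →
      (∀ s', tstar ≤ s' → s' < s → ∀ j ∈ Finset.Icc 1 d, ((c s') j).2 ≤ ((c (s' + 1)) j).2) →
      2 * (d : ℝ) - 1 + ε ≤ ∑ i ∈ Finset.Ico 1 (treeSize d 3), pw (c s) i := by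
  obtain ⟨hvalid, hmove⟩ := hp
  have hcov₀ : covered d (c tstar) 0 := hcov
  have hblack : ∑ j ∈ Finset.Icc 1 d, (c tstar j).1 ≤ 1 - ε := calc
    _ ≤ ∑ j ∈ Finset.Icc 1 d, (c 0 j).1 := Finset.sum_le_sum fun j hj =>
          antitoneOn_nat_Icc_of_succ_le (f := fun t => (c t j).1) (fun t _ ht => hnoinc t ht j
            (child_iff_mem_children.2 (children_zero d ▸ hj)))
            ⟨le_rfl, Nat.zero_le _⟩ ⟨Nat.zero_le _, le_rfl⟩ (Nat.zero_le _)
    _ ≤ ∑ i ∈ Finset.Ico 1 (treeSize d 3), (c 0 i).1 :=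
          Finset.sum_le_sum_of_subset_of_nonneg (Icc_one_subset_Ico_treeSize_three d)
            fun i _ _ => (hvalid 0 (Nat.zero_le _)).black_nonneg i
    _ ≤ 1 - ε := hinit
  have hwhite := sum_white_children_of_covered hcov₀
  rw [children_zero] at hwhite
  refine ⟨by linarith, fun s hts hsT ⟨j₀, hj₀, hdec⟩ hmono => ?_⟩
  have hgrow : ∑ j ∈ Finset.Icc 1 d, (c tstar j).2 ≤ ∑ j ∈ Finset.Icc 1 d, (c s j).2 :=
    Finset.sum_le_sum fun j hj => monotoneOn_nat_Icc_of_le_succ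
      (f := fun t => (c t j).2) (fun t ht hts' => hmono t ht hts' j hj)
      ⟨le_rfl, hts⟩ ⟨hts, le_rfl⟩ hts
  have hsubtree := sum_white_children_zero_add_le_of_covered (hvalid s hsT.le) hj₀
    ((hmove s hsT).covered_of_white_lt hdec)
  linarith

/-- on the d-ary tree of height 3, if the black weight of the
root's children never increases before a time t* at which all children have
pebble weight 1, and the initial black subtree weight is at most 1-ε, then the
white weight on the children at t* is at least d-1+ε, and at the first time
after t* at which any of this white weight is removed the subtree weight is at
least 2d-1+ε. -/
theorem frac_base_no_black_increase (d : ℕ) (hd : 2 ≤ d)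
    (ε : ℝ) (hε1 : -(1 / 2) < ε) (hε2 : ε ≤ 1 / 2)
    (T : ℕ) (c : ℕ → Cfg) (tstar : ℕ)
    (hp : Pebbling d (treeSize d 3) T c)
    (ht : tstar ≤ T)
    (hcov : ∀ j, child d 0 j → pw (c tstar) j = 1)
    (hinit : (∑ i ∈ Finset.Ico 1 (treeSize d 3), ((c 0) i).1) ≤ 1 - ε)
    (hnoinc : ∀ t, t < tstar → ∀ j, child d 0 j → ((c (t + 1)) j).1 ≤ ((c t) j).1) :
    ((d : ℝ) - 1 + ε ≤ ∑ j ∈ Finset.Icc 1 d, ((c tstar) j).2) ∧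
    ∀ s, tstar ≤ s → s < T →
      (∃ j ∈ Finset.Icc 1 d, ((c (s + 1)) j).2 < ((c s) j).2) →
      (∀ s', tstar ≤ s' → s' < s → ∀ j ∈ Finset.Icc 1 d, ((c s') j).2 ≤ ((c (s' + 1)) j).2) →
      2 * (d : ℝ) - 1 + ε ≤ ∑ i ∈ Finset.Ico 1 (treeSize d 3), pw (c s) i :=
  frac_base_no_black_increase_general d ε T c tstar hp hcov hinit hnoinc
end

section
/- In the whole black-white pebbling game on the balanced binary tree of height h+2 (h ≥ 2), assume inductively that every root-pebbling of the height-h tree requires weight at least h/2+1 at some time. Then every root-pebbling of the height-(h+2) tree requires weight at least h/2+2 at some time. -/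
/-- A black-white configuration: each node gets (black, white) ∈ {0,1}². -/
abbrev BWCfg := ℕ → Bool × Bool

/-- Pebble weight of node i. -/
def bwpw (c : BWCfg) (i : ℕ) : ℕ :=
  (if (c i).1 then 1 else 0) + (if (c i).2 then 1 else 0)

/-- b(i) + w(i) ≤ 1 for all nodes. -/
def bwValid (c : BWCfg) : Prop := ∀ i, ¬((c i).1 = true ∧ (c i).2 = true)

def bwweight (n : ℕ) (c : BWCfg) : ℕ := ∑ i ∈ Finset.range n, bwpw c i

/-- Every child of i has pebble weight 1. -/
def bwcovered (d : ℕ) (c : BWCfg) (i : ℕ) : Prop := ∀ j, child d i j → bwpw c j = 1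

/-- Legal whole black-white pebbling moves: remove a black pebble; on a node
whose children all have pebble weight 1, set w(i)=0 and/or set b(i)=1, optionally
simultaneously removing black pebbles from any children; place a white pebble
anywhere; place a black pebble on any leaf. -/
def BWMove (d n : ℕ) (c c' : BWCfg) : Prop :=
  (∃ i, c' = Function.update c i (false, (c i).2)) ∨
  (∃ i, i < n ∧ bwcovered d c i ∧ (c' i = (true, false) ∨ c' i = ((c i).1, false)) ∧
    (∀ j, child d i j → (c' j = c j ∨ c' j = (false, (c j).2))) ∧
    (∀ j, j ≠ i → ¬ child d i j → c' j = c j)) ∨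
  (∃ i, i < n ∧ c' = Function.update c i ((c i).1, true)) ∨
  (∃ i, isLeaf d n i ∧ c' = Function.update c i (true, (c i).2))

def BWPebbling (d n T : ℕ) (c : ℕ → BWCfg) : Prop :=
  (∀ t, t ≤ T → bwValid (c t)) ∧ (∀ t, t < T → BWMove d n (c t) (c (t + 1)))

def BWEmpty (c : BWCfg) : Prop := ∀ i, c i = (false, false)

/-- Root-pebbling: starts and ends empty; at some time the root has pebble weight 1. -/
def BWRootPebbling (d n T : ℕ) (c : ℕ → BWCfg) : Prop :=
  BWPebbling d n T c ∧ BWEmpty (c 0) ∧ BWEmpty (c T) ∧ ∃ t, t ≤ T ∧ bwpw (c t) 0 = 1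

/-!
Suppose every configuration of a root-pebbling of the height-`(h+2)` tree has weight at most
`r = ⌈h/2⌉ + 1`. Restricted to a maximal period during which the subtree below a grandchild `v`
of the root is occupied, the pebbling is a root-pebbling of a height-`h` tree, so at some time
`sᵥ` that subtree alone carries weight `r` and every other node is empty. Follow the pebble on
the root to a time `σ` at which both children `1, 2` are pebbled, and the pebble on child `i` to
a time `τᵢ` at which both of its children are pebbled. Node `i` stays pebbled between `τᵢ` and
`σ`, so every `sᵥ` lies before both `τᵢ` or after both. Among the grandchildren `3, 4, 5` two
have their `sᵥ` on the same side, and the subtree of the earlier one is still occupied at the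
later time, where it should be empty.
-/

namespace HeapIndex

def depth (x : ℕ) : ℕ := Nat.log 2 (x + 1)

lemma two_pow_depth_le (x : ℕ) : 2 ^ depth x ≤ x + 1 :=
  Nat.pow_log_le_self 2 (Nat.succ_ne_zero x)

lemma lt_two_pow_depth_succ (x : ℕ) : x + 1 < 2 ^ (depth x + 1) :=
  Nat.lt_pow_succ_log_self (by norm_num) _

lemma depth_eq_zero_iff {x : ℕ} : depth x = 0 ↔ x = 0 := by
  simp only [depth, Nat.log_eq_zero_iff]
  omega

lemma depth_succ (k : ℕ) : depth (k + 1) = depth (k / 2) + 1 := by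
  rw [depth, Nat.log_of_one_lt_of_le (by norm_num) (by omega), depth]
  congr 2
  omega

lemma depth_two_mul_add_one (x : ℕ) : depth (2 * x + 1) = depth x + 1 := by
  rw [depth_succ]
  congr 2
  omega

lemma depth_two_mul_add_two (x : ℕ) : depth (2 * x + 2) = depth x + 1 := by
  rw [depth_succ]
  congr 2
  omega

lemma treeSize_two_add_one (H : ℕ) : treeSize 2 H + 1 = 2 ^ H := by
  induction H with
  | zero => rfl
  | succ H ih => rw [treeSize, Finset.sum_range_succ, ← treeSize, pow_succ]; omega

lemma lt_treeSize_iff {x H : ℕ} : x < treeSize 2 H ↔ depth x < H := by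
  rw [depth, Nat.log_lt_iff_lt_pow (by norm_num) (Nat.succ_ne_zero x), ← treeSize_two_add_one]
  omega

lemma isLeaf_iff {x H : ℕ} : isLeaf 2 (treeSize 2 H) x ↔ depth x + 1 = H := by
  rw [isLeaf, lt_treeSize_iff, ← not_lt, lt_treeSize_iff, depth_two_mul_add_one]
  omega

lemma child_iff {i j : ℕ} : child 2 i j ↔ j = 2 * i + 1 ∨ j = 2 * i + 2 := by
  constructor
  · rintro ⟨k, hk, rfl⟩
    omega
  · rintro (rfl | rfl)
    exacts [⟨0, by omega, rfl⟩, ⟨1, by omega, rfl⟩]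

lemma eq_of_child_of_child {i i' j : ℕ} (h : child 2 i j) (h' : child 2 i' j) : i = i' := by
  rw [child_iff] at h h'
  omega

/-- `subtreeNode v k` is the node of the tree that has index `k` in the subtree rooted at `v`. -/
def subtreeNode (v : ℕ) : ℕ → ℕ
  | 0 => v
  | k + 1 => 2 * subtreeNode v (k / 2) + 1 + k % 2
  decreasing_by omega

lemma subtreeNode_zero (v : ℕ) : subtreeNode v 0 = v := by
  rw [subtreeNode]

lemma subtreeNode_succ (v k : ℕ) :
    subtreeNode v (k + 1) = 2 * subtreeNode v (k / 2) + 1 + k % 2 := by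
  rw [subtreeNode]

lemma child_subtreeNode_of_child {v k j : ℕ} (h : child 2 k j) :
    child 2 (subtreeNode v k) (subtreeNode v j) := by
  obtain ⟨e, he, rfl⟩ := h
  refine ⟨e, he, ?_⟩
  rw [show 2 * k + 1 + e = (2 * k + e) + 1 by omega, subtreeNode_succ,
    show (2 * k + e) / 2 = k by omega, show (2 * k + e) % 2 = e by omega]

lemma child_subtreeNode_of_pos {v k : ℕ} (hk : 0 < k) :
    child 2 (subtreeNode v ((k - 1) / 2)) (subtreeNode v k) := by
  obtain ⟨k, rfl⟩ := Nat.exists_eq_add_of_lt hk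
  exact ⟨k % 2, Nat.mod_lt _ (by norm_num), by rw [zero_add, subtreeNode_succ]; rfl⟩

/-- In binary, `subtreeNode v k + 1` is `k + 1` with its leading digit `1` replaced by the
digits of `v + 1`. -/
lemma subtreeNode_add_one (v k : ℕ) :
    subtreeNode v k + 1 + 2 ^ depth k = (v + 1) * 2 ^ depth k + (k + 1) := by
  induction k using Nat.strong_induction_on with
  | _ k ih =>
    rcases k with _ | k
    · simp [subtreeNode_zero, depth]
    · have hk := ih (k / 2) (by omega)
      rw [subtreeNode_succ, depth_succ, pow_succ, ← mul_assoc]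
      have := Nat.div_add_mod k 2
      omega

lemma depth_subtreeNode (v k : ℕ) : depth (subtreeNode v k) = depth v + depth k := by
  have hspec := subtreeNode_add_one v k
  have hv₁ := two_pow_depth_le v
  have hv₂ := lt_two_pow_depth_succ v
  have hk₁ := two_pow_depth_le k
  have hk₂ := lt_two_pow_depth_succ k
  rw [pow_succ] at hv₂ hk₂
  apply Nat.log_eq_of_pow_le_of_lt_pow
  · calc 2 ^ (depth v + depth k) = 2 ^ depth v * 2 ^ depth k := pow_add _ _ _
      _ ≤ (v + 1) * 2 ^ depth k := Nat.mul_le_mul_right _ hv₁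
      _ ≤ subtreeNode v k + 1 := by omega
  · calc subtreeNode v k + 1 < (v + 1 + 1) * 2 ^ depth k := by rw [add_one_mul]; omega
      _ ≤ 2 ^ depth v * 2 * 2 ^ depth k := Nat.mul_le_mul_right _ hv₂
      _ = 2 ^ (depth v + depth k + 1) := by ring

lemma le_subtreeNode (v k : ℕ) : v ≤ subtreeNode v k := by
  have hspec := subtreeNode_add_one v k
  have hk₁ := two_pow_depth_le k
  have := Nat.le_mul_of_pos_right (v + 1) (Nat.two_pow_pos (depth k))
  omega

lemma subtreeNode_inj {v v' k k' : ℕ} (hd : depth v = depth v')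
    (h : subtreeNode v k = subtreeNode v' k') : v = v' ∧ k = k' := by
  have hL : depth k = depth k' := by
    have := depth_subtreeNode v k
    rw [h, depth_subtreeNode] at this
    omega
  have hspec := subtreeNode_add_one v k
  have hspec' := subtreeNode_add_one v' k'
  rw [h, hL] at hspec
  have hk₁ := two_pow_depth_le k'
  have hk₂ := lt_two_pow_depth_succ k'
  have hk₁' := two_pow_depth_le k
  have hk₂' := lt_two_pow_depth_succ k
  rw [hL] at hk₁' hk₂'
  rw [pow_succ] at hk₂ hk₂'
  have hv : (subtreeNode v' k' + 1) / 2 ^ depth k' = v + 1 :=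
    Nat.div_eq_of_lt_le (by omega) (by rw [add_one_mul]; omega)
  have hv' : (subtreeNode v' k' + 1) / 2 ^ depth k' = v' + 1 :=
    Nat.div_eq_of_lt_le (by omega) (by rw [add_one_mul]; omega)
  obtain rfl : v = v' := by omega
  exact ⟨rfl, by omega⟩

lemma subtreeNode_injective (v : ℕ) : Function.Injective (subtreeNode v) :=
  fun _ _ h => (subtreeNode_inj rfl h).2

lemma child_subtreeNode_iff {v k j : ℕ} :
    child 2 (subtreeNode v k) (subtreeNode v j) ↔ child 2 k j := by
  refine ⟨fun h => ?_, child_subtreeNode_of_child⟩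
  rcases Nat.eq_zero_or_pos j with rfl | hj
  · have := le_subtreeNode v k
    rw [child_iff, subtreeNode_zero] at h
    omega
  · have := subtreeNode_injective v
      (eq_of_child_of_child h (child_subtreeNode_of_pos (v := v) hj))
    rw [child_iff]
    omega

lemma subtreeNode_lt_treeSize_iff {v k d H : ℕ} (hv : depth v = d) :
    subtreeNode v k < treeSize 2 (H + d) ↔ k < treeSize 2 H := by
  rw [lt_treeSize_iff, lt_treeSize_iff, depth_subtreeNode]
  omega

lemma isLeaf_subtreeNode_iff {v k d H : ℕ} (hv : depth v = d) :
    isLeaf 2 (treeSize 2 (H + d)) (subtreeNode v k) ↔ isLeaf 2 (treeSize 2 H) k := by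
  rw [isLeaf_iff, isLeaf_iff, depth_subtreeNode]
  omega

lemma subtreeNode_ne_of_depth_le {v k x : ℕ} (hx : depth x ≤ depth v) (hxv : x ≠ v) :
    subtreeNode v k ≠ x := by
  rintro rfl
  rw [depth_subtreeNode] at hx
  obtain rfl : k = 0 := depth_eq_zero_iff.1 (by omega)
  exact hxv (subtreeNode_zero v)

end HeapIndex

lemma Nat.exists_gap_around {P : ℕ → Prop} {τ T : ℕ} (h₀ : P 0) (hT : P T) (hτ : τ ≤ T) :
    ∃ A B, A ≤ τ ∧ τ ≤ B ∧ B ≤ T ∧ P A ∧ P B ∧ ∀ t, A < t → t < B → ¬ P t := by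
  classical
  have hB : ∃ B, τ ≤ B ∧ P B := ⟨T, hτ, hT⟩
  obtain ⟨hτB, hPB⟩ := Nat.find_spec hB
  refine ⟨Nat.findGreatest P τ, Nat.find hB, Nat.findGreatest_le τ, hτB,
    Nat.find_min' hB ⟨hτ, hT⟩, Nat.findGreatest_spec (Nat.zero_le τ) h₀, hPB,
    fun t hAt htB hPt => ?_⟩
  rcases le_total t τ with htτ | hτt
  · exact Nat.findGreatest_is_greatest hAt htτ hPt
  · exact Nat.find_min hB htB ⟨hτt, hPt⟩

lemma Nat.cast_div_two_add_le_cast_iff {h a w : ℕ} :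
    (h : ℝ) / 2 + a ≤ w ↔ (h + 1) / 2 + a ≤ w := by
  rw [div_add' _ _ _ two_ne_zero, div_le_iff₀ two_pos]
  norm_cast
  omega

section Game

variable {d n : ℕ}

lemma bwpw_eq_zero_iff {c : BWCfg} {i : ℕ} : bwpw c i = 0 ↔ c i = (false, false) := by
  unfold bwpw
  rcases c i with ⟨_ | _, _ | _⟩ <;> simp

lemma bwpw_pos_iff {c : BWCfg} {i : ℕ} : 0 < bwpw c i ↔ (c i).1 = true ∨ (c i).2 = true := by
  unfold bwpw
  rcases c i with ⟨_ | _, _ | _⟩ <;> simp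

@[simp]
lemma bwpw_comp (c : BWCfg) (f : ℕ → ℕ) (i : ℕ) : bwpw (c ∘ f) i = bwpw c (f i) :=
  rfl

lemma bwweight_eq_zero_of_bwEmpty {c : BWCfg} (hc : BWEmpty c) : bwweight n c = 0 :=
  Finset.sum_eq_zero fun i _ => bwpw_eq_zero_iff.2 (hc i)

lemma bwpw_add_bwweight_comp_le {c : BWCfg} {f : ℕ → ℕ} {m N x : ℕ}
    (hf : Function.Injective f) (hfN : ∀ k < m, f k < N) (hxN : x < N)
    (hx : x ∉ Set.range f) : bwpw c x + bwweight m (c ∘ f) ≤ bwweight N c := by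
  classical
  have hsub : insert x ((Finset.range m).image f) ⊆ Finset.range N := by
    simpa [Finset.insert_subset_iff, Finset.image_subset_iff, hxN] using hfN
  calc bwpw c x + bwweight m (c ∘ f) = ∑ i ∈ insert x ((Finset.range m).image f), bwpw c i := by
        rw [Finset.sum_insert (by simpa using fun k _ h => hx ⟨k, h⟩),
          Finset.sum_image hf.injOn]
        rfl
    _ ≤ bwweight N c := Finset.sum_le_sum_of_subset hsub

lemma BWMove.self {c : BWCfg} {i : ℕ} (hi : (c i).1 = false) : BWMove d n c c :=
  Or.inl ⟨i, by rw [← hi, Function.update_eq_self]⟩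

lemma BWMove.eq_empty_of_le {c c' : BWCfg} {x : ℕ} (hm : BWMove d n c c') (hx : n ≤ x)
    (hcx : c x = (false, false)) : c' x = (false, false) := by
  rcases hm with ⟨i, rfl⟩ | ⟨i, hi, -, -, hch, hoth⟩ | ⟨i, hi, rfl⟩ | ⟨i, ⟨hi, -⟩, rfl⟩
  · by_cases hix : x = i
    · subst hix; simp [hcx]
    · simp [hix, hcx]
  · by_cases hcix : child d i x
    · rcases hch x hcix with h | h <;> simp [h, hcx]
    · rw [hoth x (by omega) hcix, hcx]
  · rw [Function.update_of_ne (by omega), hcx]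
  · rw [Function.update_of_ne (by omega), hcx]

lemma BWMove.bwcovered_of_fst {c c' : BWCfg} {x : ℕ} (hm : BWMove d n c c')
    (hx : d * x + 1 < n) (h : (c x).1 = false) (h' : (c' x).1 = true) : bwcovered d c x := by
  rcases hm with ⟨i, rfl⟩ | ⟨i, -, hcov, -, hch, hoth⟩ | ⟨i, -, rfl⟩ | ⟨i, ⟨-, hi⟩, rfl⟩
  · by_cases hix : x = i
    · subst hix; simp at h'
    · simp [hix, h] at h'
  · by_cases hix : x = i
    · exact hix ▸ hcov
    · by_cases hcix : child d i x
      · rcases hch x hcix with e | e <;> simp [e, h] at h'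
      · simp [hoth x hix hcix, h] at h'
  · by_cases hix : x = i
    · subst hix; simp [h] at h'
    · simp [hix, h] at h'
  · by_cases hix : x = i
    · subst hix; omega
    · simp [hix, h] at h'

lemma BWMove.bwcovered_of_snd {c c' : BWCfg} {x : ℕ} (hm : BWMove d n c c')
    (h : (c x).2 = true) (h' : (c' x).2 = false) : bwcovered d c x := by
  rcases hm with ⟨i, rfl⟩ | ⟨i, -, hcov, -, hch, hoth⟩ | ⟨i, -, rfl⟩ | ⟨i, -, rfl⟩
  · by_cases hix : x = i
    · subst hix; simp [h] at h'
    · simp [hix, h] at h'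
  · by_cases hix : x = i
    · exact hix ▸ hcov
    · by_cases hcix : child d i x
      · rcases hch x hcix with e | e <;> simp [e, h] at h'
      · simp [hoth x hix hcix, h] at h'
  · by_cases hix : x = i
    · subst hix; simp at h'
    · simp [hix, h] at h'
  · by_cases hix : x = i
    · subst hix; simp [h] at h'
    · simp [hix, h] at h'

lemma BWPebbling.eq_empty_of_le {T t x : ℕ} {c : ℕ → BWCfg} (hc : BWPebbling d n T c)
    (h₀ : BWEmpty (c 0)) (ht : t ≤ T) (hx : n ≤ x) : c t x = (false, false) := by
  induction t with
  | zero => exact h₀ x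
  | succ t ih => exact (hc.2 t (by omega)).eq_empty_of_le hx (ih (by omega))

/-- A pebble on an internal node `x` at time `t` was created by, or will be removed by, a move
that requires `x` to be covered; `x` carries a pebble at all times in between. -/
lemma BWRootPebbling.exists_bwcovered {T t x : ℕ} {c : ℕ → BWCfg}
    (hc : BWRootPebbling d n T c) (hx : d * x + 1 < n) (ht : t ≤ T)
    (hpw : bwpw (c t) x = 1) :
    ∃ τ ≤ T, bwcovered d (c τ) x ∧ ∀ s ∈ Set.uIcc τ t, s ≠ τ → 0 < bwpw (c s) x := by
  obtain ⟨hc, h₀, hT, -⟩ := hc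
  rcases bwpw_pos_iff.1 hpw.ge with hb | hw
  · obtain ⟨A, B, hAt, htB, hBT, hA, hB, hgap⟩ :=
      Nat.exists_gap_around (P := fun s => (c s x).1 = false) (by simp [h₀ x]) (by simp [hT x]) ht
    have hAt : A < t := lt_of_le_of_ne hAt (by rintro rfl; simp [hb] at hA)
    have hBt : t < B := lt_of_le_of_ne htB (by rintro rfl; simp [hb] at hB)
    have black : ∀ s, A < s → s ≤ t → (c s x).1 = true := fun s h₁ h₂ => by
      simpa using hgap s h₁ (by omega)
    refine ⟨A, by omega, (hc.2 A (by omega)).bwcovered_of_fst hx hA (black _ (by omega) hAt), ?_⟩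
    intro s hs hsA
    rw [Set.uIcc_of_le hAt.le] at hs
    exact bwpw_pos_iff.2 (Or.inl (black s (lt_of_le_of_ne hs.1 (Ne.symm hsA)) hs.2))
  · obtain ⟨A, B, hAt, htB, hBT, hA, hB, hgap⟩ :=
      Nat.exists_gap_around (P := fun s => (c s x).2 = false) (by simp [h₀ x]) (by simp [hT x]) ht
    have hAt : A < t := lt_of_le_of_ne hAt (by rintro rfl; simp [hw] at hA)
    have hBt : t < B := lt_of_le_of_ne htB (by rintro rfl; simp [hw] at hB)
    have white : ∀ s, t ≤ s → s < B → (c s x).2 = true := fun s h₁ h₂ => by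
      simpa using hgap s (by omega) h₂
    refine ⟨B - 1, by omega, (hc.2 (B - 1) (by omega)).bwcovered_of_snd
      (white _ (by omega) (by omega)) (by rwa [Nat.sub_add_cancel (by omega)]), ?_⟩
    intro s hs _
    rw [Set.uIcc_of_ge (by omega)] at hs
    exact bwpw_pos_iff.2 (Or.inr (white s hs.1 (by have := hs.2; omega)))

end Game

section Subtree

open HeapIndex

variable {H d v : ℕ}

lemma comp_subtreeNode_of_bwcovered_move {c c' : BWCfg} {i : ℕ}
    (hi : i ∉ Set.range (subtreeNode v))
    (hch : ∀ j, child 2 i j → c' j = c j ∨ c' j = (false, (c j).2))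
    (hoth : ∀ j, j ≠ i → ¬ child 2 i j → c' j = c j) :
    c' ∘ subtreeNode v = c ∘ subtreeNode v ∨
      c' ∘ subtreeNode v = Function.update (c ∘ subtreeNode v) 0
        (false, ((c ∘ subtreeNode v) 0).2) := by
  have hne : ∀ k, subtreeNode v k ≠ i := fun k hk => hi ⟨k, hk⟩
  have hpos : ∀ k, 0 < k → c' (subtreeNode v k) = c (subtreeNode v k) := fun k hk =>
    hoth _ (hne k) fun hik => hne _
      (eq_of_child_of_child (child_subtreeNode_of_pos hk) hik)
  have hroot : c' v = c v ∨ c' v = (false, (c v).2) := by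
    by_cases hiv : child 2 i v
    · exact hch v hiv
    · exact Or.inl (hoth v (by simpa [subtreeNode_zero] using hne 0) hiv)
  rcases hroot with hroot | hroot
  · refine Or.inl (funext fun k => ?_)
    rcases Nat.eq_zero_or_pos k with rfl | hk
    · simpa [subtreeNode_zero] using hroot
    · exact hpos k hk
  · refine Or.inr (funext fun k => ?_)
    rcases Nat.eq_zero_or_pos k with rfl | hk
    · simpa [subtreeNode_zero] using hroot
    · simpa [Function.update_of_ne hk.ne'] using hpos k hk

/-- Moves outside the subtree become the removal of an absent black pebble, from a node that
lies below the subtree's height. -/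
lemma BWMove.comp_subtreeNode {c c' : BWCfg} (hv : depth v = d)
    (hout : ∀ x, treeSize 2 (H + d) ≤ x → c x = (false, false))
    (hm : BWMove 2 (treeSize 2 (H + d)) c c') :
    BWMove 2 (treeSize 2 H) (c ∘ subtreeNode v) (c' ∘ subtreeNode v) := by
  have hstay : BWMove 2 (treeSize 2 H) (c ∘ subtreeNode v) (c ∘ subtreeNode v) :=
    BWMove.self (i := treeSize 2 H) <| by
      simp [hout _ (not_lt.1 ((subtreeNode_lt_treeSize_iff hv).not.2 (lt_irrefl _)))]
  have hupdate : ∀ i y, (∀ k, i = subtreeNode v k → BWMove 2 (treeSize 2 H)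
      (c ∘ subtreeNode v) (Function.update (c ∘ subtreeNode v) k y)) →
      BWMove 2 (treeSize 2 H) (c ∘ subtreeNode v) (Function.update c i y ∘ subtreeNode v) := by
    intro i y hmove
    by_cases hi : i ∈ Set.range (subtreeNode v)
    · obtain ⟨k, rfl⟩ := hi
      rw [Function.update_comp_eq_of_injective _ (subtreeNode_injective v)]
      exact hmove k rfl
    · rwa [Function.update_comp_eq_of_notMem_range _ _ hi]
  rcases hm with ⟨i, rfl⟩ | ⟨i, hi, hcov, hctr, hch, hoth⟩ | ⟨i, hi, rfl⟩ | ⟨i, hi, rfl⟩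
  · exact hupdate _ _ fun k hk => Or.inl ⟨k, by rw [hk]; rfl⟩
  · by_cases hir : i ∈ Set.range (subtreeNode v)
    · obtain ⟨k, rfl⟩ := hir
      refine Or.inr (Or.inl ⟨k, (subtreeNode_lt_treeSize_iff hv).1 hi,
        fun j hj => hcov _ (child_subtreeNode_of_child hj), hctr,
        fun j hj => hch _ (child_subtreeNode_of_child hj),
        fun j hjk hj => hoth _ ((subtreeNode_injective v).ne hjk)
          (mt child_subtreeNode_iff.1 hj)⟩)
    · rcases comp_subtreeNode_of_bwcovered_move hir hch hoth with h | h <;> rw [h]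
      exacts [hstay, Or.inl ⟨0, rfl⟩]
  · exact hupdate _ _ fun k hk =>
      Or.inr (Or.inr (Or.inl ⟨k, (subtreeNode_lt_treeSize_iff hv).1 (hk ▸ hi), by rw [hk]; rfl⟩))
  · exact hupdate _ _ fun k hk =>
      Or.inr (Or.inr (Or.inr ⟨k, (isLeaf_subtreeNode_iff hv).1 (hk ▸ hi), by rw [hk]; rfl⟩))

lemma eq_empty_of_le_bwweight_comp_subtreeNode {c : BWCfg} {r x : ℕ} (hv : depth v = d)
    (hout : ∀ x, treeSize 2 (H + d) ≤ x → c x = (false, false))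
    (hsub : r ≤ bwweight (treeSize 2 H) (c ∘ subtreeNode v))
    (hc : bwweight (treeSize 2 (H + d)) c ≤ r) (hx : x ∉ Set.range (subtreeNode v)) :
    c x = (false, false) := by
  by_cases hxN : x < treeSize 2 (H + d)
  · have := bwpw_add_bwweight_comp_le (c := c) (subtreeNode_injective v)
      (fun k hk => (subtreeNode_lt_treeSize_iff hv).2 hk) hxN hx
    exact bwpw_eq_zero_iff.1 (by omega)
  · exact hout x (not_lt.1 hxN)

lemma BWRootPebbling.exists_le_bwweight_comp_subtreeNode {T τ r : ℕ} {c : ℕ → BWCfg}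
    (IH : ∀ T c, BWRootPebbling 2 (treeSize 2 H) T c →
      ∃ t ≤ T, r ≤ bwweight (treeSize 2 H) (c t))
    (hr : 0 < r) (hv : depth v = d) (hc : BWRootPebbling 2 (treeSize 2 (H + d)) T c)
    (hτ : τ ≤ T) (hpw : bwpw (c τ) v = 1) :
    ∃ s ≤ T, r ≤ bwweight (treeSize 2 H) (c s ∘ subtreeNode v) ∧
      ∀ t ∈ Set.uIcc s τ, ¬ BWEmpty (c t ∘ subtreeNode v) := by
  obtain ⟨hP, h₀, hT, -⟩ := hc
  obtain ⟨A, B, hAτ, hτB, hBT, hA, hB, hgap⟩ :=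
    Nat.exists_gap_around (P := fun t => BWEmpty (c t ∘ subtreeNode v))
      (fun _ => h₀ _) (fun _ => hT _) hτ
  have hτ₀ : ¬ BWEmpty (c τ ∘ subtreeNode v) := fun h => by
    have := bwpw_eq_zero_iff.2 (h 0)
    rw [bwpw_comp, subtreeNode_zero] at this
    omega
  have hAτ : A < τ := lt_of_le_of_ne hAτ fun h => hτ₀ (h ▸ hA)
  have hτB : τ < B := lt_of_le_of_ne hτB fun h => hτ₀ (h ▸ hB)
  have hsub : BWRootPebbling 2 (treeSize 2 H) (B - A) (fun t => c (A + t) ∘ subtreeNode v) := by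
    refine ⟨⟨fun t _ k => hP.1 _ (by omega) _, fun t ht => ?_⟩, hA,
      by simpa only [Nat.add_sub_cancel' (hAτ.trans hτB).le] using hB,
      τ - A, by omega, by simpa [Nat.add_sub_cancel' hAτ.le, subtreeNode_zero] using hpw⟩
    show BWMove _ _ (c (A + t) ∘ _) (c (A + t + 1) ∘ _)
    exact (hP.2 _ (by omega)).comp_subtreeNode hv fun x hx => hP.eq_empty_of_le h₀ (by omega) hx
  obtain ⟨t, ht, hrt⟩ := IH _ _ hsub
  have hne : ¬ BWEmpty (c (A + t) ∘ subtreeNode v) := fun h => by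
    rw [bwweight_eq_zero_of_bwEmpty h] at hrt
    omega
  have hAt : A ≠ A + t := fun h => hne (h ▸ hA)
  have htB : A + t ≠ B := fun h => hne (h ▸ hB)
  refine ⟨A + t, by omega, hrt, fun s hs => hgap s ?_ ?_⟩ <;>
    rw [Set.mem_uIcc] at hs <;> omega

end Subtree

section Bottleneck

open HeapIndex

def IsBottleneck (c : ℕ → BWCfg) (v τ s : ℕ) : Prop :=
  (∀ x ∉ Set.range (subtreeNode v), c s x = (false, false)) ∧
    ∀ t ∈ Set.uIcc s τ, ¬ BWEmpty (c t ∘ subtreeNode v)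

variable {c : ℕ → BWCfg} {v τ s : ℕ}

lemma IsBottleneck.not_mem_uIcc {v' τ' s' : ℕ} (hb : IsBottleneck c v τ s)
    (hb' : IsBottleneck c v' τ' s') (hvv' : v ≠ v') (hd : depth v = depth v') :
    s' ∉ Set.uIcc s τ := fun hs' => by
  obtain ⟨k, hk⟩ : ∃ k, c s' (subtreeNode v k) ≠ (false, false) := by
    simpa [BWEmpty] using hb.2 s' hs'
  refine hk (hb'.1 _ ?_)
  rintro ⟨k', hk'⟩
  exact hvv' (subtreeNode_inj hd.symm hk').1.symm

lemma IsBottleneck.eq_of_depth_le {x : ℕ} (hb : IsBottleneck c v τ s) (hx : depth x ≤ depth v)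
    (hsx : c s x ≠ (false, false)) : x = v := by
  by_contra hxv
  exact hsx (hb.1 x fun ⟨k, hk⟩ => subtreeNode_ne_of_depth_le hx hxv hk)

/-- At `τₓ` both children of `x` are pebbled and at the other times of `[[τₓ, σ]]` `x` is,
whereas at `s` only the subtree at `v` carries pebbles. -/
lemma IsBottleneck.not_mem_uIcc_of_bwcovered {x σ τₓ : ℕ} (hb : IsBottleneck c v τ s)
    (hx : depth x + 1 = depth v) (hcov : bwcovered 2 (c τₓ) x)
    (hg : ∀ t ∈ Set.uIcc τₓ σ, t ≠ τₓ → 0 < bwpw (c t) x) : s ∉ Set.uIcc τₓ σ := fun hs => by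
  have hne : ∀ y, 0 < bwpw (c s) y → c s y ≠ (false, false) := fun y hy h => by
    rw [bwpw_eq_zero_iff.2 h] at hy
    exact lt_irrefl 0 hy
  by_cases hsτ : s = τₓ
  · subst hsτ
    have h₁ := hb.eq_of_depth_le (by rw [depth_two_mul_add_one]; omega)
      (hne _ (hcov _ (child_iff.2 (Or.inl rfl))).ge)
    have h₂ := hb.eq_of_depth_le (by rw [depth_two_mul_add_two]; omega)
      (hne _ (hcov _ (child_iff.2 (Or.inr rfl))).ge)
    omega
  · obtain rfl := hb.eq_of_depth_le (by omega) (hne _ (hg s hs hsτ))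
    omega

lemma BWRootPebbling.exists_isBottleneck {H d r T : ℕ}
    (IH : ∀ T c, BWRootPebbling 2 (treeSize 2 H) T c →
      ∃ t ≤ T, r ≤ bwweight (treeSize 2 H) (c t))
    (hr : 0 < r) (hv : depth v = d) (hc : BWRootPebbling 2 (treeSize 2 (H + d)) T c)
    (hW : ∀ t ≤ T, bwweight (treeSize 2 (H + d)) (c t) ≤ r) (hτ : τ ≤ T)
    (hpw : bwpw (c τ) v = 1) : ∃ s ≤ T, IsBottleneck c v τ s := by
  obtain ⟨s, hs, hrs, hocc⟩ := hc.exists_le_bwweight_comp_subtreeNode IH hr hv hτ hpw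
  exact ⟨s, hs, fun x hx => eq_empty_of_le_bwweight_comp_subtreeNode hv
    (fun y hy => hc.1.eq_empty_of_le hc.2.1 hs hy) hrs (hW s hs) hx, hocc⟩

end Bottleneck

open HeapIndex in
lemma BWRootPebbling.exists_lt_bwweight {H r : ℕ} (hH : 1 ≤ H) (hr : 0 < r)
    (IH : ∀ T c, BWRootPebbling 2 (treeSize 2 H) T c →
      ∃ t ≤ T, r ≤ bwweight (treeSize 2 H) (c t))
    {T : ℕ} {c : ℕ → BWCfg} (hc : BWRootPebbling 2 (treeSize 2 (H + 2)) T c) :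
    ∃ t ≤ T, r < bwweight (treeSize 2 (H + 2)) (c t) := by
  by_contra! hW
  have h5 : 2 * 2 + 1 < treeSize 2 (H + 2) := by
    rw [lt_treeSize_iff, show depth (2 * 2 + 1) = 2 by decide]
    omega
  obtain ⟨t₀, ht₀, hroot⟩ := hc.2.2.2
  obtain ⟨σ, hσ, hcovσ, -⟩ := hc.exists_bwcovered (x := 0) (by omega) ht₀ hroot
  obtain ⟨τ₁, hτ₁, hcov₁, hg₁⟩ :=
    hc.exists_bwcovered (x := 1) (by omega) hσ (hcovσ 1 (child_iff.2 (Or.inl rfl)))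
  obtain ⟨τ₂, hτ₂, hcov₂, hg₂⟩ :=
    hc.exists_bwcovered (x := 2) (by omega) hσ (hcovσ 2 (child_iff.2 (Or.inr rfl)))
  obtain ⟨s₃, -, b₃⟩ := hc.exists_isBottleneck IH hr (v := 3) (by decide) hW hτ₁
    (hcov₁ 3 (child_iff.2 (Or.inl rfl)))
  obtain ⟨s₄, -, b₄⟩ := hc.exists_isBottleneck IH hr (v := 4) (by decide) hW hτ₁
    (hcov₁ 4 (child_iff.2 (Or.inr rfl)))
  obtain ⟨s₅, -, b₅⟩ := hc.exists_isBottleneck IH hr (v := 5) (by decide) hW hτ₂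
    (hcov₂ 5 (child_iff.2 (Or.inl rfl)))
  -- Each `sᵥ` lies before both of `τ₁, τ₂` or after both; two of them on the same side would
  -- lie in each other's occupied periods.
  have h₃₁ := b₃.not_mem_uIcc_of_bwcovered (by decide) hcov₁ hg₁
  have h₃₂ := b₃.not_mem_uIcc_of_bwcovered (by decide) hcov₂ hg₂
  have h₄₁ := b₄.not_mem_uIcc_of_bwcovered (by decide) hcov₁ hg₁
  have h₄₂ := b₄.not_mem_uIcc_of_bwcovered (by decide) hcov₂ hg₂
  have h₅₁ := b₅.not_mem_uIcc_of_bwcovered (by decide) hcov₁ hg₁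
  have h₅₂ := b₅.not_mem_uIcc_of_bwcovered (by decide) hcov₂ hg₂
  have h₃₄ := b₃.not_mem_uIcc b₄ (by decide) (by decide)
  have h₄₃ := b₄.not_mem_uIcc b₃ (by decide) (by decide)
  have h₃₅ := b₃.not_mem_uIcc b₅ (by decide) (by decide)
  have h₅₃ := b₅.not_mem_uIcc b₃ (by decide) (by decide)
  have h₄₅ := b₄.not_mem_uIcc b₅ (by decide) (by decide)
  have h₅₄ := b₅.not_mem_uIcc b₄ (by decide) (by decide)
  simp only [Set.mem_uIcc] at *
  omega

/-- inductive step for the black-white lower bound: if every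
root-pebbling of the height-h binary tree needs weight h/2 + 1 at some time,
then every root-pebbling of the height-(h+2) binary tree needs weight h/2 + 2
at some time. -/
theorem bw_lower_inductive_step (h : ℕ) (hh : 2 ≤ h)
    (IH : ∀ T (c : ℕ → BWCfg), BWRootPebbling 2 (treeSize 2 h) T c →
      ∃ t, t ≤ T ∧ (h : ℝ) / 2 + 1 ≤ (bwweight (treeSize 2 h) (c t) : ℝ)) :
    ∀ T (c : ℕ → BWCfg), BWRootPebbling 2 (treeSize 2 (h + 2)) T c →
      ∃ t, t ≤ T ∧ (h : ℝ) / 2 + 2 ≤ (bwweight (treeSize 2 (h + 2)) (c t) : ℝ) := by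
  have hIH : ∀ T c, BWRootPebbling 2 (treeSize 2 h) T c →
      ∃ t ≤ T, (h + 1) / 2 + 1 ≤ bwweight (treeSize 2 h) (c t) := fun T c hc => by
    obtain ⟨t, ht, hw⟩ := IH T c hc
    exact ⟨t, ht, Nat.cast_div_two_add_le_cast_iff.1 (by exact_mod_cast hw)⟩
  intro T c hc
  obtain ⟨t, ht, hw⟩ := BWRootPebbling.exists_lt_bwweight (by omega) (by omega) hIH hc
  exact ⟨t, ht, by exact_mod_cast Nat.cast_div_two_add_le_cast_iff (a := 2).2 hw⟩
end
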